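/- arXiv:2108.02987 — 2 statements merged into one kernel-verified Lean document; each statement's English description precedes it below -/
import Mathlib

section
/- The value iteration operator is a contraction: let X = {x_1,...,x_n} ⊂ R^d, U a finite nonempty control set, g : R^d × U → R, f : R^d × U → R^d, λ > 0 and Δt ∈ (0, 1/λ]. Define W : R^n → R^n by [W(V)]_j = min_{u∈U} { Δt g(x_j,u) + (1−Δt λ) S^σ[V](x_j + Δt f(x_j,u)) }, where S^σ[V](x) = Σ_i V_i ψ_i^σ(x) with nonnegative Shepard weights summing to 1 at every evaluated point. Then W is a contraction on (R^n, ‖·‖_∞) with Lipschitz constant 1 − Δt λ < 1. -/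
lemma inf'_abs_sub_le {α : Type*} [Fintype α] (h : (Finset.univ : Finset α).Nonempty)
    (F G : α → ℝ) (B : ℝ) (hB : ∀ u, |F u - G u| ≤ B) :
    |Finset.univ.inf' h F - Finset.univ.inf' h G| ≤ B := by
  rw [abs_sub_le_iff]
  constructor
  · obtain ⟨u, -, hu⟩ := Finset.exists_mem_eq_inf' h G
    calc Finset.univ.inf' h F - Finset.univ.inf' h G ≤ F u - G u := by
          rw [hu]; gcongr; exact Finset.inf'_le _ (Finset.mem_univ u)
      _ ≤ B := (abs_le.mp (hB u)).2.trans_eq' rfl |>.trans le_rfl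
  · obtain ⟨u, -, hu⟩ := Finset.exists_mem_eq_inf' h F
    calc Finset.univ.inf' h G - Finset.univ.inf' h F ≤ G u - F u := by
          rw [hu]; gcongr; exact Finset.inf'_le _ (Finset.mem_univ u)
      _ ≤ B := by have := (abs_le.mp (hB u)).1; linarith

/-- The value iteration operator is a contraction with constant 1 - Δt·λ. -/
theorem value_iteration_contraction
    {d n : ℕ} {C : Type*} [Fintype C] [Nonempty C]
    (x : Fin n → EuclideanSpace ℝ (Fin d))
    (f : EuclideanSpace ℝ (Fin d) → C → EuclideanSpace ℝ (Fin d))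
    (g : EuclideanSpace ℝ (Fin d) → C → ℝ)
    (lam Δt : ℝ) (hlam : 0 < lam) (hΔt : 0 < Δt) (hΔt' : Δt ≤ 1 / lam)
    (ψ : Fin n → EuclideanSpace ℝ (Fin d) → ℝ)
    (hψ0 : ∀ i p, 0 ≤ ψ i p)
    (hψ1 : ∀ j u, ∑ i, ψ i (x j + Δt • f (x j) u) = 1)
    (W : (Fin n → ℝ) → (Fin n → ℝ))
    (hW : ∀ V j, W V j = Finset.univ.inf' Finset.univ_nonempty
      (fun u : C => Δt * g (x j) u +
        (1 - Δt * lam) * ∑ i, V i * ψ i (x j + Δt • f (x j) u))) :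
    (∀ V V' : Fin n → ℝ, ‖W V - W V'‖ ≤ (1 - Δt * lam) * ‖V - V'‖) ∧
    1 - Δt * lam < 1 := by
  have hc : 0 ≤ 1 - Δt * lam := by
    have h1 : Δt * lam ≤ (1/lam) * lam := by gcongr
    rw [one_div_mul_cancel hlam.ne'] at h1
    linarith
  refine ⟨?_, by nlinarith⟩
  intro V V'
  rw [pi_norm_le_iff_of_nonneg (by positivity)]
  intro j
  simp only [Pi.sub_apply, hW, Real.norm_eq_abs]
  apply inf'_abs_sub_le
  intro u
  have key : |∑ i, V i * ψ i (x j + Δt • f (x j) u)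
      - ∑ i, V' i * ψ i (x j + Δt • f (x j) u)| ≤ ‖V - V'‖ := by
    rw [← Finset.sum_sub_distrib]
    calc |∑ i, (V i * ψ i (x j + Δt • f (x j) u) - V' i * ψ i (x j + Δt • f (x j) u))|
        ≤ ∑ i, |V i * ψ i (x j + Δt • f (x j) u) - V' i * ψ i (x j + Δt • f (x j) u)| :=
          Finset.abs_sum_le_sum_abs _ _
      _ = ∑ i, |V i - V' i| * ψ i (x j + Δt • f (x j) u) := by
          refine Finset.sum_congr rfl fun i _ => ?_
          rw [← sub_mul, abs_mul, abs_of_nonneg (hψ0 _ _)]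
      _ ≤ ∑ i, ‖V - V'‖ * ψ i (x j + Δt • f (x j) u) := by
          refine Finset.sum_le_sum fun i _ => ?_
          gcongr
          · exact hψ0 _ _
          · exact (norm_le_pi_norm (V - V') i).trans_eq' (by simp [Real.norm_eq_abs])
      _ = ‖V - V'‖ := by rw [← Finset.mul_sum, hψ1 j u, mul_one]
  calc |(Δt * g (x j) u + (1 - Δt * lam) * ∑ i, V i * ψ i (x j + Δt • f (x j) u))
      - (Δt * g (x j) u + (1 - Δt * lam) * ∑ i, V' i * ψ i (x j + Δt • f (x j) u))|
      = (1 - Δt * lam) * |∑ i, V i * ψ i (x j + Δt • f (x j) u)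
        - ∑ i, V' i * ψ i (x j + Δt • f (x j) u)| := by
        rw [add_sub_add_left_eq_sub, ← mul_sub, abs_mul, abs_of_nonneg hc]
    _ ≤ (1 - Δt * lam) * ‖V - V'‖ := by gcongr
end

section
/- Space discretization error of the value iteration (Theorem 4.2 core inequality): suppose V ∈ R^n solves V_j = min_{u∈U}{Δt g(x_j,u) + (1−Δtλ) S^σ[V](x_j + Δt f(x_j,u))} and v^{Δt} solves v^{Δt}(x) = min_{u∈U}{Δt g(x,u) + (1−Δtλ) v^{Δt}(x + Δt f(x,u))}. If Δt ∈ (0,1/λ), S^σ is nonexpansive (‖S^σ[V] − S^σ[w]‖_{∞,Ω̃} ≤ max_j |V_j − w(x_j)|), and the Shepard error bound ‖v^{Δt} − S^σ[v^{Δt}]‖_{∞,Ω̃} ≤ C L_v h holds, and all points x_j + Δt f(x_j,u) for optimal u lie in Ω̃, then max_j |V_j − v^{Δt}(x_j)| ≤ (C L_v / λ) · (h / Δt). -/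
lemma abs_inf'_sub_inf'_le {α : Type*} (s : Finset α) (hs : s.Nonempty)
    (f g : α → ℝ) (c : ℝ) (hc : ∀ u ∈ s, |f u - g u| ≤ c) :
    |s.inf' hs f - s.inf' hs g| ≤ c := by
  rw [abs_sub_le_iff]
  constructor
  · obtain ⟨u, hu, hug⟩ := s.exists_mem_eq_inf' hs g
    have h1 : s.inf' hs f ≤ f u := Finset.inf'_le _ hu
    have h2 := hc u hu
    rw [abs_le] at h2
    rw [hug]; linarith
  · obtain ⟨u, hu, huf⟩ := s.exists_mem_eq_inf' hs f
    have h1 : s.inf' hs g ≤ g u := Finset.inf'_le _ hu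
    have h2 := hc u hu
    rw [abs_le] at h2
    rw [huf]; linarith



/-- Space discretization error of the value iteration: the fully discrete value
function differs from the semi-discrete one by at most (C·L_v/λ)·(h/Δt). -/
theorem space_discretization_error
    {d n : ℕ} {Ctrl : Type*} [Fintype Ctrl] [Nonempty Ctrl]
    (Ωt : Set (EuclideanSpace ℝ (Fin d)))
    (x : Fin n → EuclideanSpace ℝ (Fin d)) (hxΩ : ∀ j, x j ∈ Ωt)
    (f : EuclideanSpace ℝ (Fin d) → Ctrl → EuclideanSpace ℝ (Fin d))
    (g : EuclideanSpace ℝ (Fin d) → Ctrl → ℝ)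
    (lam Δt C Lv h : ℝ) (hlam : 0 < lam) (hΔt : 0 < Δt) (hΔt' : Δt < 1 / lam)
    (hC : 0 < C) (hLv : 0 < Lv) (hh : 0 ≤ h)
    (ψ : Fin n → EuclideanSpace ℝ (Fin d) → ℝ)
    (hψ0 : ∀ i p, 0 ≤ ψ i p)
    (hψ1 : ∀ p ∈ Ωt, ∑ i, ψ i p = 1)
    (hz : ∀ j (u : Ctrl), x j + Δt • f (x j) u ∈ Ωt)
    (V : Fin n → ℝ)
    (hV : ∀ j, V j = Finset.univ.inf' Finset.univ_nonempty
      (fun u : Ctrl => Δt * g (x j) u +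
        (1 - Δt * lam) * ∑ i, V i * ψ i (x j + Δt • f (x j) u)))
    (vdt : EuclideanSpace ℝ (Fin d) → ℝ)
    (hvdt : ∀ y ∈ Ωt, vdt y = Finset.univ.inf' Finset.univ_nonempty
      (fun u : Ctrl => Δt * g y u + (1 - Δt * lam) * vdt (y + Δt • f y u)))
    (hshepard : ∀ y ∈ Ωt, |vdt y - ∑ i, vdt (x i) * ψ i y| ≤ C * Lv * h) :
    ∀ j, |V j - vdt (x j)| ≤ C * Lv / lam * (h / Δt) := by

  intro j
  have hne : (Finset.univ : Finset (Fin n)).Nonempty := ⟨j, Finset.mem_univ j⟩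
  have hβ0 : 0 < 1 - Δt * lam := by
    have : Δt * lam < (1 / lam) * lam := by
      apply mul_lt_mul_of_pos_right hΔt' hlam
    rw [one_div_mul_cancel hlam.ne'] at this
    linarith
  have hβ1 : 1 - Δt * lam < 1 := by nlinarith
  set M := Finset.univ.sup' hne (fun i => |V i - vdt (x i)|) with hMdef
  have hM0 : 0 ≤ M := le_trans (abs_nonneg _) (Finset.le_sup' (fun i => |V i - vdt (x i)|) (Finset.mem_univ j))
  have key : ∀ i, |V i - vdt (x i)| ≤ (1 - Δt * lam) * (M + C * Lv * h) := by
    intro i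
    rw [hV i, hvdt (x i) (hxΩ i)]
    apply abs_inf'_sub_inf'_le
    intro u _
    have heq : Δt * g (x i) u + (1 - Δt * lam) * ∑ k, V k * ψ k (x i + Δt • f (x i) u)
        - (Δt * g (x i) u + (1 - Δt * lam) * vdt (x i + Δt • f (x i) u))
        = (1 - Δt * lam) * ((∑ k, V k * ψ k (x i + Δt • f (x i) u))
          - vdt (x i + Δt • f (x i) u)) := by ring
    rw [heq, abs_mul, abs_of_pos hβ0]
    apply mul_le_mul_of_nonneg_left _ (le_of_lt hβ0)
    set z := x i + Δt • f (x i) u with hzdef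
    have hzΩ : z ∈ Ωt := hz i u
    have hsplit : |(∑ k, V k * ψ k z) - vdt z|
        ≤ |(∑ k, V k * ψ k z) - ∑ k, vdt (x k) * ψ k z| + |(∑ k, vdt (x k) * ψ k z) - vdt z| := by
      exact abs_sub_le _ _ _
    have h1 : |(∑ k, V k * ψ k z) - ∑ k, vdt (x k) * ψ k z| ≤ M := by
      rw [← Finset.sum_sub_distrib]
      calc |∑ k, (V k * ψ k z - vdt (x k) * ψ k z)|
          ≤ ∑ k, |V k * ψ k z - vdt (x k) * ψ k z| := Finset.abs_sum_le_sum_abs _ _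
        _ ≤ ∑ k, M * ψ k z := by
            apply Finset.sum_le_sum
            intro k _
            have : V k * ψ k z - vdt (x k) * ψ k z = (V k - vdt (x k)) * ψ k z := by ring
            rw [this, abs_mul, abs_of_nonneg (hψ0 k z)]
            exact mul_le_mul_of_nonneg_right (Finset.le_sup' (fun i => |V i - vdt (x i)|) (Finset.mem_univ k)) (hψ0 k z)
        _ = M := by rw [← Finset.mul_sum, hψ1 z hzΩ, mul_one]
    have h2 : |(∑ k, vdt (x k) * ψ k z) - vdt z| ≤ C * Lv * h := by
      rw [abs_sub_comm]; exact hshepard z hzΩ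
    linarith
  have hMle : M ≤ (1 - Δt * lam) * (M + C * Lv * h) :=
    Finset.sup'_le _ _ fun i _ => key i
  have hj : |V j - vdt (x j)| ≤ M := Finset.le_sup' (fun i => |V i - vdt (x i)|) (Finset.mem_univ j)
  have hfin : M * (lam * Δt) ≤ C * Lv * h := by nlinarith [hC.le, hLv.le, mul_nonneg (mul_nonneg hC.le hLv.le) hh]
  have hgoal : C * Lv / lam * (h / Δt) = (C * Lv * h) / (lam * Δt) := by
    field_simp
  rw [hgoal, le_div_iff₀ (by positivity)]
  nlinarith [mul_le_mul_of_nonneg_right hj (by positivity : (0:ℝ) ≤ lam * Δt)]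
end
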